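/- Let a, b > 0, let v ∈ P₂ ⊕ span{y³}, and let q_r and q_l be univariate polynomials of degree at most 1 in y satisfying the moment-matching conditions ∫₀ᵇ q_r(y) dy = ∫₀ᵇ v(a,y) dy, ∫₀ᵇ q_r(y)·(2y−b) dy = ∫₀ᵇ v(a,y)·(2y−b) dy, ∫₀ᵇ q_l(y) dy = ∫₀ᵇ v(0,y) dy, and ∫₀ᵇ q_l(y)·(2y−b) dy = ∫₀ᵇ v(0,y)·(2y−b) dy. Then v(a,y) − q_r(y) = v(0,y) − q_l(y) for every y ∈ ℝ. -/
import Mathlib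

open MvPolynomial

/-- Membership in `P₂ ⊕ span{y³}`, the space of first components of the
vector-valued shape function space `V_K` of the Stokes element. -/
def memP2y3 (v : MvPolynomial (Fin 2) ℝ) : Prop :=
  ∃ (p : MvPolynomial (Fin 2) ℝ) (c : ℝ),
    p.totalDegree ≤ 2 ∧ v = p + C c * X 1 ^ 3

lemma aux_eval (t y : ℝ) (w : MvPolynomial (Fin 2) ℝ) :
    (MvPolynomial.aeval ![Polynomial.C t, Polynomial.X] w).eval y
      = MvPolynomial.eval ![t, y] w := by
  induction w using MvPolynomial.induction_on with
  | C r => simp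
  | add p q hp hq => simp [hp, hq]
  | mul_X p i hp => fin_cases i <;> simp [hp]

lemma aux_deg (a : ℝ) (p : MvPolynomial (Fin 2) ℝ) (hp : p.totalDegree ≤ 2) :
    ((MvPolynomial.aeval ![Polynomial.C a, Polynomial.X] p : Polynomial ℝ)
      - MvPolynomial.aeval ![Polynomial.C (0:ℝ), Polynomial.X] p).degree ≤ 1 := by
  have hrep : ∀ t : ℝ, (MvPolynomial.aeval ![Polynomial.C t, Polynomial.X] p : Polynomial ℝ)
      = ∑ m ∈ p.support, Polynomial.C (p.coeff m * t ^ m 0) * Polynomial.X ^ m 1 := by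
    intro t
    rw [MvPolynomial.aeval_def, MvPolynomial.eval₂_eq']
    refine Finset.sum_congr rfl fun m _ => ?_
    rw [Fin.prod_univ_two]
    simp only [Matrix.cons_val_zero, Matrix.cons_val_one, Matrix.head_cons,
      MvPolynomial.algebraMap_eq, Polynomial.algebraMap_eq]
    rw [Polynomial.C_mul, ← Polynomial.C_pow, mul_assoc]
  rw [hrep, hrep, ← Finset.sum_sub_distrib]
  refine (Polynomial.degree_sum_le _ _).trans ?_
  rw [Finset.sup_le_iff]
  intro m hm
  rcases Nat.eq_zero_or_pos (m 0) with h0 | h0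
  · simp [h0]
  · have hsum : m 0 + m 1 ≤ 2 := by
      have := MvPolynomial.le_totalDegree hm
      rw [Finsupp.sum_fintype _ _ (fun _ => rfl)] at this
      rw [Fin.sum_univ_two] at this
      exact this.trans hp
    have h1 : m 1 ≤ 1 := by omega
    refine (Polynomial.degree_sub_le _ _).trans (max_le ?_ ?_) <;>
    · refine (Polynomial.degree_C_mul_X_pow_le _ _).trans ?_
      exact_mod_cast h1

lemma intpoly (b u w z : ℝ) :
    (∫ y in (0:ℝ)..b, (u * y^2 + w * y + z)) = u*b^3/3 + w*b^2/2 + z*b := by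
  have i1 : IntervalIntegrable (fun y : ℝ => u * y^2) MeasureTheory.volume 0 b :=
    (continuous_const.mul (continuous_pow 2)).intervalIntegrable _ _
  have i2 : IntervalIntegrable (fun y : ℝ => w * y) MeasureTheory.volume 0 b :=
    (continuous_const.mul continuous_id).intervalIntegrable _ _
  have i3 : IntervalIntegrable (fun _ : ℝ => z) MeasureTheory.volume 0 b :=
    intervalIntegrable_const
  rw [intervalIntegral.integral_add (i1.add i2) i3,
    intervalIntegral.integral_add i1 i2,
    intervalIntegral.integral_const_mul, intervalIntegral.integral_const_mul,
    integral_pow, integral_id, intervalIntegral.integral_const]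
  simp
  ring

lemma aux_zero (b : ℝ) (hb : 0 < b) (d : Polynomial ℝ) (hd : d.degree ≤ 1)
    (h1 : (∫ y in (0:ℝ)..b, d.eval y) = 0)
    (h2 : (∫ y in (0:ℝ)..b, d.eval y * (2*y - b)) = 0) : d = 0 := by
  have hrep := Polynomial.eq_X_add_C_of_degree_le_one hd
  set c1 := d.coeff 1
  set c0 := d.coeff 0
  have hev : ∀ y : ℝ, d.eval y = c1 * y + c0 := by
    intro y; conv_lhs => rw [hrep]
    simp
  have e1 : (∫ y in (0:ℝ)..b, d.eval y) = 0*b^3/3 + c1*b^2/2 + c0*b := by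
    rw [← intpoly b 0 c1 c0]
    refine intervalIntegral.integral_congr fun y _ => ?_
    rw [hev y]; ring
  have e2 : (∫ y in (0:ℝ)..b, d.eval y * (2*y - b))
      = (2*c1)*b^3/3 + (2*c0 - c1*b)*b^2/2 + (-(c0*b))*b := by
    rw [← intpoly b (2*c1) (2*c0 - c1*b) (-(c0*b))]
    refine intervalIntegral.integral_congr fun y _ => ?_
    rw [hev y]; ring
  rw [e1] at h1; rw [e2] at h2
  have hc1 : c1 = 0 := by
    have : c1 * (b^3/6) = 0 := by linarith
    have hb3 : b^3/6 ≠ 0 := by positivity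
    exact (mul_eq_zero.mp this).resolve_right hb3
  have hc0 : c0 = 0 := by
    rw [hc1] at h1
    have : c0 * b = 0 := by linarith
    exact (mul_eq_zero.mp this).resolve_right hb.ne'
  rw [hrep, hc1, hc0]; simp

/-- if the linear polynomials `q_r` and `q_l` match the zeroth
and first moments of the traces of `v ∈ P₂ ⊕ span{y³}` on the two vertical
edges of `K = [0,a] × [0,b]`, then `v(a,·) − q_r = v(0,·) − q_l`. -/
theorem stmt14 (a b : ℝ) (ha : 0 < a) (hb : 0 < b)
    (v : MvPolynomial (Fin 2) ℝ) (hv : memP2y3 v)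
    (qr ql : Polynomial ℝ) (hqr : qr.degree ≤ 1) (hql : ql.degree ≤ 1)
    (h1 : (∫ y in (0:ℝ)..b, qr.eval y) = ∫ y in (0:ℝ)..b, eval ![a, y] v)
    (h2 : (∫ y in (0:ℝ)..b, qr.eval y * (2 * y - b)) =
      ∫ y in (0:ℝ)..b, eval ![a, y] v * (2 * y - b))
    (h3 : (∫ y in (0:ℝ)..b, ql.eval y) = ∫ y in (0:ℝ)..b, eval ![(0:ℝ), y] v)
    (h4 : (∫ y in (0:ℝ)..b, ql.eval y * (2 * y - b)) =
      ∫ y in (0:ℝ)..b, eval ![(0:ℝ), y] v * (2 * y - b)) :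
    ∀ y : ℝ, eval ![a, y] v - qr.eval y = eval ![(0:ℝ), y] v - ql.eval y := by
  obtain ⟨p, c, hp2, hveq⟩ := hv
  set fa : Polynomial ℝ := MvPolynomial.aeval ![Polynomial.C a, Polynomial.X] v with hfa_def
  set f0 : Polynomial ℝ := MvPolynomial.aeval ![Polynomial.C (0:ℝ), Polynomial.X] v with hf0_def
  have hfa : ∀ y : ℝ, fa.eval y = eval ![a, y] v := fun y => aux_eval a y v
  have hf0 : ∀ y : ℝ, f0.eval y = eval ![(0:ℝ), y] v := fun y => aux_eval 0 y v
  set d : Polynomial ℝ := (fa - qr) - (f0 - ql) with hd_def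
  -- degree bound
  have hdiff : fa - f0 = (MvPolynomial.aeval ![Polynomial.C a, Polynomial.X] p : Polynomial ℝ)
      - MvPolynomial.aeval ![Polynomial.C (0:ℝ), Polynomial.X] p := by
    rw [hfa_def, hf0_def, hveq]
    simp [map_add, map_mul, map_pow]
  have hdd : d.degree ≤ 1 := by
    have hd2 : d = (fa - f0) + (ql - qr) := by rw [hd_def]; ring
    rw [hd2, hdiff]
    refine (Polynomial.degree_add_le _ _).trans (max_le (aux_deg a p hp2) ?_)
    exact (Polynomial.degree_sub_le _ _).trans (max_le hql hqr)
  -- integrability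
  have ifa : IntervalIntegrable (fun y : ℝ => fa.eval y) MeasureTheory.volume 0 b :=
    fa.continuous.intervalIntegrable _ _
  have if0 : IntervalIntegrable (fun y : ℝ => f0.eval y) MeasureTheory.volume 0 b :=
    f0.continuous.intervalIntegrable _ _
  have iqr : IntervalIntegrable (fun y : ℝ => qr.eval y) MeasureTheory.volume 0 b :=
    qr.continuous.intervalIntegrable _ _
  have iql : IntervalIntegrable (fun y : ℝ => ql.eval y) MeasureTheory.volume 0 b :=
    ql.continuous.intervalIntegrable _ _
  have cw : Continuous (fun y : ℝ => 2 * y - b) :=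
    (continuous_const.mul continuous_id).sub continuous_const
  have ifa2 : IntervalIntegrable (fun y : ℝ => fa.eval y * (2 * y - b)) MeasureTheory.volume 0 b :=
    (fa.continuous.mul cw).intervalIntegrable _ _
  have if02 : IntervalIntegrable (fun y : ℝ => f0.eval y * (2 * y - b)) MeasureTheory.volume 0 b :=
    (f0.continuous.mul cw).intervalIntegrable _ _
  have iqr2 : IntervalIntegrable (fun y : ℝ => qr.eval y * (2 * y - b)) MeasureTheory.volume 0 b :=
    (qr.continuous.mul cw).intervalIntegrable _ _
  have iql2 : IntervalIntegrable (fun y : ℝ => ql.eval y * (2 * y - b)) MeasureTheory.volume 0 b :=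
    (ql.continuous.mul cw).intervalIntegrable _ _
  -- rewrite hypotheses in polynomial form
  have h1' : (∫ y in (0:ℝ)..b, qr.eval y) = ∫ y in (0:ℝ)..b, fa.eval y := by
    rw [h1]; exact intervalIntegral.integral_congr fun y _ => (hfa y).symm
  have h2' : (∫ y in (0:ℝ)..b, qr.eval y * (2 * y - b))
      = ∫ y in (0:ℝ)..b, fa.eval y * (2 * y - b) := by
    rw [h2]; exact (intervalIntegral.integral_congr fun y _ => by rw [hfa y]).symm
  have h3' : (∫ y in (0:ℝ)..b, ql.eval y) = ∫ y in (0:ℝ)..b, f0.eval y := by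
    rw [h3]; exact intervalIntegral.integral_congr fun y _ => (hf0 y).symm
  have h4' : (∫ y in (0:ℝ)..b, ql.eval y * (2 * y - b))
      = ∫ y in (0:ℝ)..b, f0.eval y * (2 * y - b) := by
    rw [h4]; exact (intervalIntegral.integral_congr fun y _ => by rw [hf0 y]).symm
  -- moments of d vanish
  have hdev : ∀ y : ℝ, d.eval y = fa.eval y - qr.eval y - (f0.eval y - ql.eval y) := by
    intro y; rw [hd_def]; simp
  have m1 : (∫ y in (0:ℝ)..b, d.eval y) = 0 := by
    have : (∫ y in (0:ℝ)..b, d.eval y)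
        = ∫ y in (0:ℝ)..b, (fa.eval y - qr.eval y - (f0.eval y - ql.eval y)) :=
      intervalIntegral.integral_congr fun y _ => hdev y
    rw [this, intervalIntegral.integral_sub (ifa.sub iqr) (if0.sub iql),
      intervalIntegral.integral_sub ifa iqr, intervalIntegral.integral_sub if0 iql,
      h1', h3']
    ring
  have m2 : (∫ y in (0:ℝ)..b, d.eval y * (2*y - b)) = 0 := by
    have : (∫ y in (0:ℝ)..b, d.eval y * (2*y - b))
        = ∫ y in (0:ℝ)..b, (fa.eval y * (2*y - b) - qr.eval y * (2*y - b)
            - (f0.eval y * (2*y - b) - ql.eval y * (2*y - b))) :=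
      intervalIntegral.integral_congr fun y _ => by rw [hdev y]; ring
    rw [this, intervalIntegral.integral_sub (ifa2.sub iqr2) (if02.sub iql2),
      intervalIntegral.integral_sub ifa2 iqr2, intervalIntegral.integral_sub if02 iql2,
      h2', h4']
    ring
  have hd0 : d = 0 := aux_zero b hb d hdd m1 m2
  intro y
  have : d.eval y = 0 := by rw [hd0]; simp
  rw [hdev y, hfa y, hf0 y] at this
  linarith
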